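/- For every integer n ≥ 0 and every s > 0, one has ∫_0^s t·I_n(t) dt ≤ 2·s·I_{n+1}(s). -/

import Mathlib

open MeasureTheory Real intervalIntegral

/-- Modified Bessel function of the first kind of integer order `n`:
`I_n(t) = (1/π) ∫_0^π exp(t cos α) cos(n α) dα`. -/
noncomputable def besselI (n : ℤ) (t : ℝ) : ℝ :=
  (1 / Real.pi) * ∫ α in (0:ℝ)..Real.pi, Real.exp (t * Real.cos α) * Real.cos ((n : ℝ) * α)

/-- Modified Bessel function of the second kind of integer order `n`:
`K_n(t) = ∫_0^∞ exp(−t cosh α) cosh(n α) dα`. -/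
noncomputable def besselK (n : ℤ) (t : ℝ) : ℝ :=
  ∫ α in Set.Ioi (0:ℝ), Real.exp (-t * Real.cosh α) * Real.cosh ((n : ℝ) * α)

/-! From `2 cos α cos((n+1)α) = cos(nα) + cos((n+2)α)` and `(t e^{t c})' = (1 + t c) e^{t c}`,
Fubini and the fundamental theorem of calculus give
`∫_0^s (2 I_{n+1} + t I_n + t I_{n+2}) dt = 2 s I_{n+1}(s)`; the theorem follows since
`I_m(t) ≥ 0` for `t ≥ 0` and every integer `m`. For that, expanding `exp (t cos α)` into its power
series reduces it to `∫_0^π cos^k α cos(mα) dα ≥ 0`, which follows by induction on `k` from the same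
product formula. -/

open scoped Nat

theorem integral_cos_intCast_mul_nonneg (m : ℤ) : 0 ≤ ∫ α in 0..π, cos (m * α) := by
  rcases eq_or_ne m 0 with rfl | hm
  · simpa using pi_nonneg
  · rw [integral_comp_mul_left cos (Int.cast_ne_zero.mpr hm), integral_cos]
    simp [sin_int_mul_pi]

theorem integral_cos_pow_mul_cos_intCast_mul_nonneg (k : ℕ) (m : ℤ) :
    0 ≤ ∫ α in 0..π, cos α ^ k * cos (m * α) := by
  induction k generalizing m with
  | zero => simpa using integral_cos_intCast_mul_nonneg m
  | succ k ih =>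
    have hsplit : ∀ α : ℝ, cos α ^ (k + 1) * cos (m * α) =
        (cos α ^ k * cos ((m - 1 : ℤ) * α) + cos α ^ k * cos ((m + 1 : ℤ) * α)) / 2 := by
      intro α
      push_cast
      rw [sub_mul, add_mul, one_mul, ← mul_add, ← two_mul_cos_mul_cos]
      ring
    have hint : ∀ j : ℤ, IntervalIntegrable (fun α => cos α ^ k * cos (j * α)) volume 0 π :=
      fun j => (by fun_prop : Continuous _).intervalIntegrable _ _
    simp_rw [hsplit]
    rw [intervalIntegral.integral_div, integral_add (hint _) (hint _)]
    have hlow := ih (m - 1)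
    have hhigh := ih (m + 1)
    positivity

theorem integral_exp_mul_cos_mul_cos_intCast_mul_nonneg (m : ℤ) {t : ℝ} (ht : 0 ≤ t) :
    0 ≤ ∫ α in 0..π, exp (t * cos α) * cos (m * α) := by
  have hsum : HasSum (fun k : ℕ => ∫ α in 0..π, (t * cos α) ^ k / k ! * cos (m * α))
      (∫ α in 0..π, exp (t * cos α) * cos (m * α)) := by
    refine hasSum_integral_of_dominated_convergence (fun k _ => t ^ k / k !)
      (fun k => (by fun_prop : Continuous _).aestronglyMeasurable) (fun k => ?_)
      (.of_forall fun _ _ => summable_pow_div_factorial t) intervalIntegrable_const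
      (.of_forall fun α _ => ?_)
    · refine .of_forall fun α _ => ?_
      rw [norm_mul, norm_div, norm_pow, norm_mul, Real.norm_natCast, Real.norm_of_nonneg ht]
      calc (t * ‖cos α‖) ^ k / k ! * ‖cos (m * α)‖
          ≤ (t * 1) ^ k / k ! * 1 := by gcongr <;> exact abs_cos_le_one _
        _ = t ^ k / k ! := by ring
    · rw [exp_eq_exp_ℝ]
      exact (NormedSpace.expSeries_div_hasSum_exp (t * cos α)).mul_right _
  refine hsum.nonneg fun k => ?_
  have hpull : ∫ α in 0..π, (t * cos α) ^ k / k ! * cos (m * α) =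
      t ^ k / k ! * ∫ α in 0..π, cos α ^ k * cos (m * α) := by
    rw [← intervalIntegral.integral_const_mul]; congr 1; ext α; ring
  rw [hpull]
  have hmoment := integral_cos_pow_mul_cos_intCast_mul_nonneg k m
  positivity

theorem besselI_nonneg (m : ℤ) {t : ℝ} (ht : 0 ≤ t) : 0 ≤ besselI m t :=
  mul_nonneg (by positivity) (integral_exp_mul_cos_mul_cos_intCast_mul_nonneg m ht)

@[fun_prop]
theorem continuous_besselI (m : ℤ) : Continuous (besselI m) :=
  continuous_const.mul <| continuous_parametric_intervalIntegral_of_continuous' (by fun_prop) _ _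

theorem integral_one_add_mul_mul_exp_mul (c s : ℝ) :
    ∫ t in 0..s, (1 + t * c) * exp (t * c) = s * exp (s * c) := by
  have hderiv : ∀ t, HasDerivAt (fun u => u * exp (u * c)) ((1 + t * c) * exp (t * c)) t :=
    fun t => ((hasDerivAt_id' t).fun_mul (hasDerivAt_mul_const c).exp).congr_deriv (by ring)
  rw [integral_eq_sub_of_hasDerivAt (fun t _ => hderiv t)
    ((by fun_prop : Continuous _).intervalIntegrable _ _)]
  simp

theorem two_mul_besselI_add_mul_add_eq_integral (m : ℤ) (t : ℝ) :
    2 * besselI (m + 1) t + t * (besselI m t + besselI (m + 2) t) =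
      1 / π * ∫ α in 0..π, 2 * ((1 + t * cos α) * exp (t * cos α)) * cos ((m + 1 : ℤ) * α) := by
  have hint : ∀ j : ℤ, IntervalIntegrable (fun α => exp (t * cos α) * cos (j * α)) volume 0 π :=
    fun j => (by fun_prop : Continuous _).intervalIntegrable _ _
  have hsplit : ∀ α, 2 * ((1 + t * cos α) * exp (t * cos α)) * cos ((m + 1 : ℤ) * α) =
      2 * (exp (t * cos α) * cos ((m + 1 : ℤ) * α)) +
        t * (exp (t * cos α) * cos (m * α) + exp (t * cos α) * cos ((m + 2 : ℤ) * α)) := by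
    intro α
    have h := two_mul_cos_mul_cos ((m + 1) * α) α
    rw [show (m + 1) * α - α = m * α by ring, show (m + 1) * α + α = (m + 2) * α by ring] at h
    push_cast
    linear_combination t * exp (t * cos α) * h
  simp only [besselI, hsplit]
  rw [integral_add ((hint _).const_mul 2) (((hint _).add (hint _)).const_mul t),
    intervalIntegral.integral_const_mul, intervalIntegral.integral_const_mul,
    integral_add (hint _) (hint _)]
  push_cast
  ring

theorem integral_two_mul_besselI_add_mul_add (m : ℤ) (s : ℝ) :
    ∫ t in 0..s, (2 * besselI (m + 1) t + t * (besselI m t + besselI (m + 2) t)) =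
      2 * s * besselI (m + 1) s := by
  simp_rw [two_mul_besselI_add_mul_add_eq_integral, intervalIntegral.integral_const_mul]
  rw [intervalIntegral_intervalIntegral_swap]
  · simp_rw [intervalIntegral.integral_mul_const, intervalIntegral.integral_const_mul,
      integral_one_add_mul_mul_exp_mul]
    simp only [besselI, ← intervalIntegral.integral_const_mul]
    congr 1; ext α; ring
  · exact ((by fun_prop : Continuous _).continuousOn.integrableOn_compact
      (isCompact_uIcc.prod isCompact_uIcc)).mono_set
      (Set.prod_mono Set.uIoc_subset_uIcc Set.uIoc_subset_uIcc)

theorem integral_mul_besselI_le_general (n : ℤ) (s : ℝ) (hs : 0 < s) :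
    (∫ t in (0:ℝ)..s, t * besselI n t) ≤ 2 * s * besselI (n + 1) s := by
  rw [← integral_two_mul_besselI_add_mul_add]
  refine integral_mono_on hs.le ((by fun_prop : Continuous _).intervalIntegrable _ _)
    ((by fun_prop : Continuous _).intervalIntegrable _ _) fun t ht => ?_
  have hI₁ := besselI_nonneg (n + 1) ht.1
  have hI₂ := mul_nonneg ht.1 (besselI_nonneg (n + 2) ht.1)
  linarith

/-- `∫_0^s t·I_n(t) dt ≤ 2·s·I_{n+1}(s)` for `n ≥ 0` and `s > 0`. -/
theorem integral_mul_besselI_le (n : ℤ) (hn : 0 ≤ n) (s : ℝ) (hs : 0 < s) :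
    (∫ t in (0:ℝ)..s, t * besselI n t) ≤ 2 * s * besselI (n + 1) s :=
  integral_mul_besselI_le_general n s hs
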